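/- Let U be a finite set, let z be a nondegenerate nonnegative weight vector, let S ⊆ U be nonempty and T ⊆ U. Then: (i) if T ⊇ S, then ∂f(S)/∂z_T = 1; (ii) if T ∩ S = ∅, then ∂f(S)/∂z_T = 0; (iii) f(S) ≥ Σ_{E ⊆ U : E ⊇ S} z_E. -/

import Mathlib

open Finset

variable {α : Type*} [Fintype α] [DecidableEq α]

/-- `E` crosses `S` if both `S ∩ E` and `S \ E` are nonempty. -/
def Crosses (E S : Finset α) : Prop := (S ∩ E).Nonempty ∧ (S \ E).Nonempty

instance (E S : Finset α) : Decidable (Crosses E S) := by unfold Crosses; infer_instance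

/-- The family of subsets of the ground set crossing `S`. -/
def crossers (S : Finset α) : Finset (Finset α) := univ.filter (fun E => Crosses E S)

/-- `ℓ(p)`: total weight of the sets containing `p`. -/
def ell (z : Finset α → ℝ) (p : α) : ℝ := ∑ E ∈ univ.filter (fun E => p ∈ E), z E

lemma card_sdiff_lt_of_mem_crossers {E S : Finset α} (h : E ∈ crossers S) :
    (S \ E).card < S.card := by
  rw [crossers, mem_filter] at h
  unfold Crosses at h
  obtain ⟨-, ⟨x, hx⟩, -⟩ := h
  refine card_lt_card ((ssubset_iff_of_subset sdiff_subset).mpr ?_)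
  exact ⟨x, (mem_inter.mp hx).1, fun hmem => (mem_sdiff.mp hmem).2 (mem_inter.mp hx).2⟩

/-- The function `f(S)` from the Closest Point Process. -/
noncomputable def fval (z : Finset α → ℝ) (S : Finset α) : ℝ :=
  if S.card ≤ 1 then ∑ p ∈ S, ell z p
  else if 0 < ∑ E ∈ crossers S, z E then
    (∑ E ∈ (crossers S).attach, z E.1 * fval z (S \ E.1)) / (∑ E ∈ crossers S, z E)
  else 0
termination_by S.card
decreasing_by exact card_sdiff_lt_of_mem_crossers E.2

/-- A weight vector is nondegenerate if every `S` with `|S| ≥ 2` has positive crossing weight. -/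
def Nondeg (z : Finset α → ℝ) : Prop :=
  ∀ S : Finset α, 2 ≤ S.card → 0 < ∑ E ∈ crossers S, z E

/-- The partial derivative `∂f(S)/∂z_T`. -/
noncomputable def pderivf (S T : Finset α) (z : Finset α → ℝ) : ℝ :=
  fderiv ℝ (fun w : Finset α → ℝ => fval w S) z (Pi.single T 1)

/-- The pseudo-derivative `∂̂f(S)/∂̂z_T`. -/
noncomputable def pdhat (z : Finset α → ℝ) (S T : Finset α) : ℝ :=
  if S ⊆ T then 1
  else if S ∩ T = ∅ then 0
  else (∑ E ∈ (crossers S).attach, z E.1 * pdhat z (S \ E.1) T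
        + fval z (S \ T) - ∑ E ∈ univ.filter (fun E => S ⊆ E), z E)
       / (∑ E ∈ crossers S, z E)
termination_by S.card
decreasing_by exact card_sdiff_lt_of_mem_crossers E.2

/-- The `m`-th harmonic number. -/
noncomputable def harm (m : ℕ) : ℝ := ∑ j ∈ Finset.range m, 1 / ((j : ℝ) + 1)

/-! Near a nondegenerate `z`, `f(S)` for `|S| ≥ 2` is the quotient of
`N(w) = ∑_{E ∈ 𝒞_S} w_E f_w(S ∖ E)` by `D(w) = ∑_{E ∈ 𝒞_S} w_E > 0`, so strong induction on `|S|`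
shows it is differentiable. If `T ⊇ S` or `T ∩ S = ∅`, then `T` does not cross `S`: moving along
`z_T` changes neither `D` nor the factors `w_E` of `N`, so `∂f(S)/∂z_T` is the `z`-weighted average
of the `∂f(S ∖ E)/∂z_T`, all equal to `1` (resp. `0`) by induction; the base case `f({p}) = ℓ(p)`
is linear with `∂ℓ(p)/∂z_T = [p ∈ T]`. Likewise `f(S)` is a weighted average of the
`f(S ∖ E) ≥ ∑_{E' ⊇ S ∖ E} z_{E'} ≥ ∑_{E' ⊇ S} z_{E'}`. -/

open Filter Topology

section Crossers

variable {E S : Finset α}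

lemma mem_crossers : E ∈ crossers S ↔ Crosses E S := by simp [crossers]

lemma sdiff_ssubset_of_mem_crossers (h : E ∈ crossers S) : S \ E ⊂ S := by
  obtain ⟨⟨x, hx⟩, -⟩ := mem_crossers.1 h
  exact ssubset_iff_of_subset sdiff_subset |>.2 ⟨x, (mem_inter.1 hx).1, fun hx' =>
    (mem_sdiff.1 hx').2 (mem_inter.1 hx).2⟩

lemma sdiff_nonempty_of_mem_crossers (h : E ∈ crossers S) : (S \ E).Nonempty :=
  (mem_crossers.1 h).2

lemma notMem_crossers_of_subset (h : S ⊆ E) : E ∉ crossers S := fun hE =>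
  (mem_crossers.1 hE).2.ne_empty (sdiff_eq_empty_iff_subset.2 h)

lemma notMem_crossers_of_disjoint (h : Disjoint E S) : E ∉ crossers S := fun hE =>
  (mem_crossers.1 hE).1.ne_empty (disjoint_iff_inter_eq_empty.1 h.symm)

end Crossers

section Fval

variable {z : Finset α → ℝ} {S : Finset α}

lemma fval_of_card_le_one (z : Finset α → ℝ) (h : S.card ≤ 1) :
    fval z S = ∑ p ∈ S, ell z p := by
  rw [fval, if_pos h]

lemma fval_of_two_le_card (h : 2 ≤ S.card) (hpos : 0 < ∑ E ∈ crossers S, z E) :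
    fval z S = (∑ E ∈ crossers S, z E * fval z (S \ E)) / ∑ E ∈ crossers S, z E := by
  rw [fval, if_neg (by omega), if_pos hpos,
    sum_attach (crossers S) fun E => z E * fval z (S \ E)]

lemma antitone_sum_filter_superset (hz : ∀ E, 0 ≤ z E) :
    Antitone fun S : Finset α => ∑ E ∈ univ.filter (S ⊆ ·), z E := fun _ _ h =>
  sum_le_sum_of_subset_of_nonneg (monotone_filter_right _ fun _ _ => h.trans) fun E _ _ => hz E

lemma sum_filter_superset_le_fval (hz : ∀ E, 0 ≤ z E) (hnd : Nondeg z) (S : Finset α)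
    (hS : S.Nonempty) : ∑ E ∈ univ.filter (S ⊆ ·), z E ≤ fval z S := by
  induction S using Finset.strongInduction with
  | H S ih =>
  obtain h1 | h2 := le_or_gt S.card 1
  · obtain ⟨p, rfl⟩ := card_eq_one.1 (le_antisymm h1 hS.card_pos)
    simp only [fval_of_card_le_one z h1, sum_singleton, ell, singleton_subset_iff, le_refl]
  have hpos := hnd S h2
  rw [fval_of_two_le_card h2 hpos, le_div_iff₀ hpos, mul_sum]
  refine sum_le_sum fun E hE => ?_
  rw [mul_comm]
  refine mul_le_mul_of_nonneg_left ?_ (hz E)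
  exact (antitone_sum_filter_superset hz sdiff_subset).trans
    (ih _ (sdiff_ssubset_of_mem_crossers hE) (sdiff_nonempty_of_mem_crossers hE))

end Fval

section Calculus

variable {𝕜 E : Type*} [NontriviallyNormedField 𝕜] [NormedAddCommGroup E] [NormedSpace 𝕜 E]

lemma fderiv_apply_eq_div_of_eventuallyEq_div {F N D : E → 𝕜} {x v : E}
    (hN : DifferentiableAt 𝕜 N x) (hD : DifferentiableAt 𝕜 D x) (hDx : D x ≠ 0)
    (hF : F =ᶠ[𝓝 x] fun y => N y / D y) (hDv : fderiv 𝕜 D x v = 0) :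
    fderiv 𝕜 F x v = fderiv 𝕜 N x v / D x := by
  have hDinv : fderiv 𝕜 (fun y => (D y)⁻¹) x v = 0 := by
    rw [← Function.comp_def, fderiv_comp x (differentiableAt_inv hDx) hD,
      ContinuousLinearMap.comp_apply, hDv, map_zero]
  simp_rw [hF.fderiv_eq, div_eq_mul_inv]
  rw [fderiv_fun_mul hN (hD.fun_inv hDx)]
  simp [hDinv, mul_comm]

end Calculus

section Derivative

variable {z : Finset α → ℝ} {S T : Finset α}

lemma ell_single (T : Finset α) (p : α) : ell (Pi.single T 1) p = if p ∈ T then 1 else 0 := by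
  simp [ell, Pi.single_apply]

lemma hasFDerivAt_fval_of_card_le_one (h : S.card ≤ 1) (z : Finset α → ℝ) :
    HasFDerivAt (fun w => fval w S)
      (∑ p ∈ S, ∑ E ∈ univ.filter (p ∈ ·), .proj E : (Finset α → ℝ) →L[ℝ] ℝ) z := by
  simp only [fval_of_card_le_one _ h, ell]
  exact HasFDerivAt.fun_sum fun p _ => HasFDerivAt.fun_sum fun E _ => hasFDerivAt_apply E z

lemma fderiv_fval_of_card_le_one (h : S.card ≤ 1) (z v : Finset α → ℝ) :
    fderiv ℝ (fun w => fval w S) z v = fval v S := by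
  simp [(hasFDerivAt_fval_of_card_le_one h z).fderiv, fval_of_card_le_one v h, ell]

lemma fval_eventuallyEq (h2 : 2 ≤ S.card) (hpos : 0 < ∑ E ∈ crossers S, z E) :
    (fun w => fval w S) =ᶠ[𝓝 z]
      fun w => (∑ E ∈ crossers S, w E * fval w (S \ E)) / ∑ E ∈ crossers S, w E := by
  have hcont : Continuous fun w : Finset α → ℝ => ∑ E ∈ crossers S, w E := by fun_prop
  filter_upwards [continuousAt_const.eventually_lt hcont.continuousAt hpos] with w hw
  exact fval_of_two_le_card h2 hw

lemma differentiableAt_fval (hnd : Nondeg z) (S : Finset α) :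
    DifferentiableAt ℝ (fun w => fval w S) z := by
  induction S using Finset.strongInduction with
  | H S ih =>
  obtain h1 | h2 := le_or_gt S.card 1
  · exact (hasFDerivAt_fval_of_card_le_one h1 z).differentiableAt
  have hN : DifferentiableAt ℝ (fun w => ∑ E ∈ crossers S, w E * fval w (S \ E)) z :=
    DifferentiableAt.fun_sum fun E hE =>
      (differentiableAt_apply E z).fun_mul (ih _ (sdiff_ssubset_of_mem_crossers hE))
  have hD : DifferentiableAt ℝ (fun w => ∑ E ∈ crossers S, w E) z := by fun_prop
  refine (fval_eventuallyEq h2 (hnd S h2)).differentiableAt_iff.2 ?_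
  simpa only [div_eq_mul_inv] using hN.fun_mul (hD.fun_inv (hnd S h2).ne')

lemma fderiv_fval_of_two_le_card (hnd : Nondeg z) (h2 : 2 ≤ S.card) {v : Finset α → ℝ}
    (hv : ∀ E ∈ crossers S, v E = 0) :
    fderiv ℝ (fun w => fval w S) z v =
      (∑ E ∈ crossers S, z E * fderiv ℝ (fun w => fval w (S \ E)) z v) /
        ∑ E ∈ crossers S, z E := by
  have hD : HasFDerivAt (fun w => ∑ E ∈ crossers S, w E)
      (∑ E ∈ crossers S, .proj E : (Finset α → ℝ) →L[ℝ] ℝ) z :=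
    HasFDerivAt.fun_sum fun E _ => hasFDerivAt_apply E z
  have hN := HasFDerivAt.fun_sum (u := crossers S) fun E _ =>
    (hasFDerivAt_apply E z).fun_mul (differentiableAt_fval hnd (S \ E)).hasFDerivAt
  rw [fderiv_apply_eq_div_of_eventuallyEq_div hN.differentiableAt hD.differentiableAt
    (hnd S h2).ne' (fval_eventuallyEq h2 (hnd S h2)) (by simp [hD.fderiv, sum_eq_zero hv]),
    hN.fderiv]
  simp only [_root_.sum_apply]
  congr 1
  refine sum_congr rfl fun E hE => ?_
  simp [hv E hE]

lemma fderiv_fval_single_of_subset (hnd : Nondeg z) (S : Finset α) (hS : S.Nonempty)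
    (hST : S ⊆ T) : fderiv ℝ (fun w => fval w S) z (Pi.single T 1) = 1 := by
  induction S using Finset.strongInduction with
  | H S ih =>
  obtain h1 | h2 := le_or_gt S.card 1
  · obtain ⟨p, rfl⟩ := card_eq_one.1 (le_antisymm h1 hS.card_pos)
    rw [fderiv_fval_of_card_le_one h1, fval_of_card_le_one _ h1, sum_singleton, ell_single,
      if_pos (singleton_subset_iff.1 hST)]
  have hT : T ∉ crossers S := notMem_crossers_of_subset hST
  rw [fderiv_fval_of_two_le_card hnd h2 fun E hE =>
      Pi.single_eq_of_ne (ne_of_mem_of_not_mem hE hT) _,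
    sum_congr rfl fun E hE => by
      rw [ih _ (sdiff_ssubset_of_mem_crossers hE) (sdiff_nonempty_of_mem_crossers hE)
        (sdiff_subset.trans hST), mul_one]]
  exact div_self (hnd S h2).ne'

lemma fderiv_fval_single_of_disjoint (hnd : Nondeg z) (S : Finset α) (hTS : Disjoint T S) :
    fderiv ℝ (fun w => fval w S) z (Pi.single T 1) = 0 := by
  induction S using Finset.strongInduction with
  | H S ih =>
  obtain h1 | h2 := le_or_gt S.card 1
  · rw [fderiv_fval_of_card_le_one h1, fval_of_card_le_one _ h1]
    exact sum_eq_zero fun p hp => by rw [ell_single, if_neg (disjoint_right.1 hTS hp)]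
  have hT : T ∉ crossers S := notMem_crossers_of_disjoint hTS
  rw [fderiv_fval_of_two_le_card hnd h2 fun E hE =>
      Pi.single_eq_of_ne (ne_of_mem_of_not_mem hE hT) _,
    sum_eq_zero fun E hE => by
      rw [ih _ (sdiff_ssubset_of_mem_crossers hE) (hTS.mono_right sdiff_subset), mul_zero],
    zero_div]

end Derivative

/-- basic properties of the partial derivatives of `f`. -/
theorem stmt6 {α : Type*} [Fintype α] [DecidableEq α]
    (z : Finset α → ℝ) (hz : ∀ E : Finset α, 0 ≤ z E) (hnd : Nondeg z)
    (S T : Finset α) (hS : S.Nonempty) :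
    (S ⊆ T → pderivf S T z = 1) ∧
    (T ∩ S = ∅ → pderivf S T z = 0) ∧
    (∑ E ∈ Finset.univ.filter (fun E => S ⊆ E), z E) ≤ fval z S :=
  ⟨fderiv_fval_single_of_subset hnd S hS,
    fun h => fderiv_fval_single_of_disjoint hnd S (disjoint_iff_inter_eq_empty.2 h),
    sum_filter_superset_le_fval hz hnd S hS⟩
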